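/- Let n ≥ 3 be an integer, ν ≥ (n−2)/2 real, let k ≥ 0 be an integer, and let σ > n/2 + k. For r, s > 0 let F_{r,s}(λ) = (rs)^{−(n−2)/2} J_ν(λr) J_ν(λs), a smooth function of λ > 0. Then there exists a constant C > 0 (depending only on n, ν, k, σ) such that for every 0 < λ ≤ 1, (∫₀^∞ ∫₀^∞ |(d/dλ)^k F_{r,s}(λ)|² (1+r)^{−2σ} (1+s)^{−2σ} (rs)^{n−1} dr ds)^{1/2} ≤ C λ^{n−2−k}. -/

import Mathlib

open MeasureTheory Real Set

/-- The Bessel function of the first kind of order `ν`, defined by its power series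
(with the convention `1/Γ = 0` at the poles of `Γ`). -/
noncomputable def besselJ (ν : ℝ) (x : ℝ) : ℝ :=
  ∑' k : ℕ, ((-1 : ℝ) ^ k / ((k.factorial : ℝ) * Real.Gamma (ν + (k : ℝ) + 1))) *
    (x / 2) ^ (2 * (k : ℝ) + ν)

/-!
Write `J_ν(x) = (x/2)^ν E(x²/4)` with `E` entire. Near `0` this gives
`|J_ν^{(i)}(x)| ≲ x^{ν-i}`. For `x ≥ ν + 1` the energy `J² + x² J'² / (x² - ν²)` is
nonincreasing along solutions of Bessel's equation, so `J` and `J'` are bounded, and the equation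
writes every `J^{(i)}` as a combination of `J` and `J'` with coefficients polynomial in `1/x`.
Hence `|J_ν^{(i)}(x)| ≲ x^μ ((1+x)/x)^i` for `0 ≤ μ = (n-2)/2 ≤ ν`, and by the chain and Leibniz
rules `|∂_λ^k F_{r,s}(λ)| ≲ λ^{n-2-k} ((1+r)(1+s))^k` for `λ ≤ 1`. Since `σ > n/2 + k`, the
remaining weight in `r` and in `s` is integrable.
-/

open Filter
open scoped ContDiff

theorem iteratedDeriv_eqOn_of_hasDerivAt {s : Set ℝ} (hs : IsOpen s) {F : ℝ → ℝ}
    {f : ℕ → ℝ → ℝ} (h0 : EqOn F (f 0) s)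
    (hf : ∀ i, ∀ x ∈ s, HasDerivAt (f i) (f (i + 1) x) x) (k : ℕ) :
    EqOn (iteratedDeriv k F) (f k) s := by
  induction k with
  | zero => simpa using h0
  | succ k ih =>
    intro x hx
    rw [iteratedDeriv_succ, (eventuallyEq_of_mem (hs.mem_nhds hx) ih).deriv_eq]
    exact (hf k x hx).deriv

theorem abs_iteratedDeriv_mul_le {f g : ℝ → ℝ} {x : ℝ} {n : ℕ} (hf : ContDiffAt ℝ n f x)
    (hg : ContDiffAt ℝ n g x) {C D a b : ℝ} (hfC : ∀ j ≤ n, |iteratedDeriv j f x| ≤ C * a ^ j)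
    (hgD : ∀ j ≤ n, |iteratedDeriv j g x| ≤ D * b ^ j) :
    |iteratedDeriv n (fun y => f y * g y) x| ≤ C * D * (a + b) ^ n := by
  rw [iteratedDeriv_fun_mul hf hg, add_pow, Finset.mul_sum]
  refine (Finset.abs_sum_le_sum_abs _ _).trans (Finset.sum_le_sum fun j hj => ?_)
  have hjn : j ≤ n := Nat.lt_succ_iff.1 (Finset.mem_range.1 hj)
  rw [abs_mul, abs_mul, Nat.abs_cast]
  calc (n.choose j : ℝ) * |iteratedDeriv j f x| * |iteratedDeriv (n - j) g x|
      ≤ n.choose j * (C * a ^ j) * (D * b ^ (n - j)) := by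
        refine mul_le_mul (mul_le_mul_of_nonneg_left (hfC j hjn) (Nat.cast_nonneg _))
          (hgD (n - j) (Nat.sub_le n j)) (abs_nonneg _) ?_
        exact mul_nonneg (Nat.cast_nonneg _) ((abs_nonneg _).trans (hfC j hjn))
    _ = _ := by ring

section PowerSeries

variable {c : ℕ → ℝ}

def derivCoeff (c : ℕ → ℝ) (m : ℕ) : ℝ := (m + 1) * c (m + 1)

theorem summable_derivCoeff (hc : ∀ R, Summable fun m => |c m| * R ^ m) (R : ℝ) :
    Summable fun m => |derivCoeff c m| * R ^ m := by
  set R' := |R| + 1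
  refine .of_norm_bounded ((summable_nat_add_iff 1).2 (hc (2 * R'))) fun m => ?_
  have hm : ((m : ℝ) + 1) ≤ 2 ^ (m + 1) := by exact_mod_cast (Nat.lt_two_pow_self).le
  have hR : |R| ^ m ≤ R' ^ (m + 1) :=
    (pow_le_pow_left₀ (abs_nonneg R) (by linarith) m).trans
      (pow_le_pow_right₀ (by linarith [abs_nonneg R]) m.le_succ)
  rw [norm_mul, norm_pow, Real.norm_eq_abs, Real.norm_eq_abs, abs_abs, derivCoeff, abs_mul,
    mul_pow, abs_of_nonneg (by positivity : (0 : ℝ) ≤ m + 1)]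
  calc (m + 1) * |c (m + 1)| * |R| ^ m ≤ 2 ^ (m + 1) * |c (m + 1)| * R' ^ (m + 1) := by gcongr
    _ = _ := by ring

theorem hasDerivAt_tsum_pow (hc : ∀ R, Summable fun m => |c m| * R ^ m) (t : ℝ) :
    HasDerivAt (fun t => ∑' m, c m * t ^ m) (∑' m, derivCoeff c m * t ^ m) t := by
  set R := |t| + 1
  have hu : Summable fun m : ℕ => |c m| * (m * R ^ (m - 1)) := by
    refine (summable_nat_add_iff 1).1 ((summable_derivCoeff hc R).congr fun m => ?_)
    rw [derivCoeff, abs_mul, Nat.add_sub_cancel, Nat.cast_succ,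
      abs_of_nonneg (by positivity : (0 : ℝ) ≤ m + 1)]
    ring
  have hbound : ∀ m : ℕ, ∀ y : ℝ, |y| < R →
      ‖c m * (m * y ^ (m - 1))‖ ≤ |c m| * (m * R ^ (m - 1)) := by
    intro m y hy
    rw [Real.norm_eq_abs, abs_mul, abs_mul, abs_pow, Nat.abs_cast]
    gcongr
  have hderiv := hasDerivAt_tsum_of_isPreconnected hu Metric.isOpen_ball
    (convex_ball (0 : ℝ) R).isPreconnected (fun m y _ => (hasDerivAt_pow m y).const_mul (c m))
    (fun m y hy => hbound m y (by simpa using hy))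
    (Metric.mem_ball_self (by positivity))
    (summable_of_ne_finset_zero (s := {0}) fun m hm => by simp_all)
    (show t ∈ Metric.ball 0 R by simp [R])
  refine hderiv.congr_deriv ?_
  rw [Summable.tsum_eq_zero_add (.of_norm_bounded hu fun m => hbound m t (by simp [R]))]
  simp only [derivCoeff, CharP.cast_eq_zero, zero_mul, mul_zero, zero_add, Nat.cast_succ,
    Nat.add_sub_cancel]
  exact tsum_congr fun m => by ring

theorem summable_mul_pow (hc : ∀ R, Summable fun m => |c m| * R ^ m) (t : ℝ) :
    Summable fun m => c m * t ^ m :=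
  .of_norm ((hc |t|).congr fun m => by rw [norm_mul, norm_pow, Real.norm_eq_abs, Real.norm_eq_abs])

theorem contDiff_tsum_pow (hc : ∀ R, Summable fun m => |c m| * R ^ m) :
    ContDiff ℝ ∞ fun t => ∑' m, c m * t ^ m := by
  rw [contDiff_infty]
  intro n
  induction n generalizing c with
  | zero => exact contDiff_zero.2 (continuous_iff_continuousAt.2 fun t =>
      (hasDerivAt_tsum_pow hc t).continuousAt)
  | succ n ih =>
    rw [Nat.cast_succ, contDiff_succ_iff_deriv]
    refine ⟨fun t => (hasDerivAt_tsum_pow hc t).differentiableAt, by simp, ?_⟩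
    rw [funext fun t => (hasDerivAt_tsum_pow hc t).deriv]
    exact ih (summable_derivCoeff hc)

end PowerSeries

section BesselSeries

open Nat

variable {ν : ℝ}

noncomputable def besselCoeff (ν : ℝ) (m : ℕ) : ℝ := (-1) ^ m / (m ! * Gamma (ν + m + 1))

noncomputable def besselSeries (ν : ℝ) (t : ℝ) : ℝ := ∑' m, besselCoeff ν m * t ^ m

theorem Gamma_add_natCast_add_one (hν : 0 ≤ ν) (m : ℕ) :
    Gamma (ν + (m + 1 : ℕ) + 1) = (ν + m + 1) * Gamma (ν + m + 1) := by
  rw [Nat.cast_succ, ← add_assoc, Gamma_add_one (by positivity)]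

theorem factorial_mul_Gamma_le (hν : 0 ≤ ν) (m : ℕ) : m ! * Gamma (ν + 1) ≤ Gamma (ν + m + 1) := by
  induction m with
  | zero => simp
  | succ m ih =>
    rw [Gamma_add_natCast_add_one hν, factorial_succ, Nat.cast_mul, Nat.cast_succ, mul_assoc]
    exact mul_le_mul (by linarith) ih (by positivity) (by positivity)

theorem abs_besselCoeff_le (hν : 0 ≤ ν) (m : ℕ) :
    |besselCoeff ν m| ≤ 1 / (m ! * Gamma (ν + 1)) := by
  have hm : (1 : ℝ) ≤ m ! := by exact_mod_cast m.factorial_pos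
  rw [besselCoeff, abs_div, abs_pow, abs_neg, abs_one, one_pow,
    abs_of_pos (mul_pos (by positivity) (Gamma_pos_of_pos (by positivity)))]
  refine one_div_le_one_div_of_le (by positivity) ?_
  calc m ! * Gamma (ν + 1) ≤ m ! * (m ! * Gamma (ν + 1)) :=
        le_mul_of_one_le_left (by positivity) hm
    _ ≤ m ! * Gamma (ν + m + 1) := by gcongr; exact factorial_mul_Gamma_le hν m

theorem summable_besselCoeff (hν : 0 ≤ ν) (R : ℝ) :
    Summable fun m => |besselCoeff ν m| * R ^ m := by
  refine .of_norm_bounded ((summable_pow_div_factorial |R|).div_const (Gamma (ν + 1))) fun m => ?_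
  rw [norm_mul, norm_pow, Real.norm_eq_abs, Real.norm_eq_abs, abs_abs]
  calc |besselCoeff ν m| * |R| ^ m ≤ 1 / (m ! * Gamma (ν + 1)) * |R| ^ m := by
        gcongr; exact abs_besselCoeff_le hν m
    _ = _ := by ring

theorem besselCoeff_succ (hν : 0 ≤ ν) (m : ℕ) :
    (m + 1) * (ν + m + 1) * besselCoeff ν (m + 1) = -besselCoeff ν m := by
  have : 0 < Gamma (ν + m + 1) := Gamma_pos_of_pos (by positivity)
  rw [besselCoeff, besselCoeff, Gamma_add_natCast_add_one hν, factorial_succ, pow_succ]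
  push_cast
  field_simp

theorem besselSeries_ode (hν : 0 ≤ ν) (t : ℝ) :
    t * ∑' m, derivCoeff (derivCoeff (besselCoeff ν)) m * t ^ m
      + (ν + 1) * ∑' m, derivCoeff (besselCoeff ν) m * t ^ m + besselSeries ν t = 0 := by
  have ha := summable_besselCoeff hν
  have s0 := summable_mul_pow ha t
  have s1 := summable_mul_pow (summable_derivCoeff ha) t
  have s2 := summable_mul_pow (summable_derivCoeff (summable_derivCoeff ha)) t
  set a := besselCoeff ν
  have h := (s2.hasSum.mul_left t).add
    ((hasSum_nat_add_iff' 1).2 ((s1.hasSum.mul_left (ν + 1)).add s0.hasSum))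
  have hterm : ∀ m, t * (derivCoeff (derivCoeff a) m * t ^ m)
      + ((ν + 1) * (derivCoeff a (m + 1) * t ^ (m + 1)) + a (m + 1) * t ^ (m + 1)) = 0 := by
    intro m
    have := besselCoeff_succ hν (m + 1)
    simp only [derivCoeff, a] at this ⊢
    push_cast at this ⊢
    linear_combination t ^ (m + 1) * this
  have h0 : (ν + 1) * derivCoeff a 0 + a 0 = 0 := by
    have := besselCoeff_succ hν 0
    simp only [derivCoeff, a, CharP.cast_eq_zero, zero_add, add_zero] at this ⊢
    linear_combination this
  simp only [hterm, Finset.range_one, Finset.sum_singleton, pow_zero, mul_one] at h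
  rw [besselSeries]
  linear_combination h.unique hasSum_zero + h0

end BesselSeries

section HalfRpowMul

variable {p : ℝ} {h : ℝ → ℝ}

noncomputable def halfRpowDerivFactor (p : ℝ) (h : ℝ → ℝ) : ℕ → ℝ → ℝ
  | 0 => h
  | i + 1 => fun x => (p - i) / 2 * halfRpowDerivFactor p h i x
      + x / 2 * deriv (halfRpowDerivFactor p h i) x

theorem hasDerivAt_half_rpow_mul {h' x : ℝ} (hx : 0 < x) (hh : HasDerivAt h h' x) :
    HasDerivAt (fun y => (y / 2) ^ p * h y) ((x / 2) ^ (p - 1) * (p / 2 * h x + x / 2 * h')) x := by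
  have hpow : HasDerivAt (fun y : ℝ => (y / 2) ^ p) (p * (x / 2) ^ (p - 1) * (1 / 2)) x :=
    (Real.hasDerivAt_rpow_const (Or.inl (by positivity))).comp x ((hasDerivAt_id x).div_const 2)
  refine (hpow.mul hh).congr_deriv ?_
  have : (x / 2) ^ p = (x / 2) ^ (p - 1) * (x / 2) := by
    rw [← Real.rpow_add_one (by positivity), sub_add_cancel]
  rw [this]
  ring

theorem contDiff_halfRpowDerivFactor (hh : ContDiff ℝ ∞ h) (i : ℕ) :
    ContDiff ℝ ∞ (halfRpowDerivFactor p h i) := by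
  induction i with
  | zero => exact hh
  | succ i ih =>
    exact (contDiff_const.mul ih).add
      ((contDiff_id.div_const 2).mul (contDiff_infty_iff_deriv.1 ih).2)

theorem hasDerivAt_halfRpowDerivFactor (hh : ContDiff ℝ ∞ h) (i : ℕ) (x : ℝ) :
    HasDerivAt (halfRpowDerivFactor p h i) (deriv (halfRpowDerivFactor p h i) x) x :=
  ((contDiff_halfRpowDerivFactor hh i).differentiable (by simp) x).hasDerivAt

theorem hasDerivAt_half_rpow_mul_halfRpowDerivFactor (hh : ContDiff ℝ ∞ h) (i : ℕ) {x : ℝ}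
    (hx : 0 < x) :
    HasDerivAt (fun y => (y / 2) ^ (p - i) * halfRpowDerivFactor p h i y)
      ((x / 2) ^ (p - (i + 1 : ℕ)) * halfRpowDerivFactor p h (i + 1) x) x := by
  convert hasDerivAt_half_rpow_mul (p := p - i) hx (hasDerivAt_halfRpowDerivFactor hh i x) using 1
  rw [Nat.cast_succ, ← sub_sub]
  rfl

variable {F : ℝ → ℝ}

theorem iteratedDeriv_eqOn_half_rpow_mul (hh : ContDiff ℝ ∞ h)
    (hF : EqOn F (fun y => (y / 2) ^ p * h y) (Ioi 0)) (i : ℕ) :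
    EqOn (iteratedDeriv i F) (fun y => (y / 2) ^ (p - i) * halfRpowDerivFactor p h i y) (Ioi 0) :=
  iteratedDeriv_eqOn_of_hasDerivAt isOpen_Ioi (by simpa [halfRpowDerivFactor] using hF)
    (fun i _ hx => hasDerivAt_half_rpow_mul_halfRpowDerivFactor hh i hx) i

theorem hasDerivAt_iteratedDeriv_of_eqOn_half_rpow_mul (hh : ContDiff ℝ ∞ h)
    (hF : EqOn F (fun y => (y / 2) ^ p * h y) (Ioi 0)) (i : ℕ) {x : ℝ} (hx : 0 < x) :
    HasDerivAt (iteratedDeriv i F) (iteratedDeriv (i + 1) F x) x := by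
  rw [iteratedDeriv_eqOn_half_rpow_mul hh hF (i + 1) hx]
  exact (hasDerivAt_half_rpow_mul_halfRpowDerivFactor hh i hx).congr_of_eventuallyEq
    (eventuallyEq_of_mem (Ioi_mem_nhds hx) (iteratedDeriv_eqOn_half_rpow_mul hh hF i))

theorem contDiffAt_of_eqOn_half_rpow_mul (hh : ContDiff ℝ ∞ h)
    (hF : EqOn F (fun y => (y / 2) ^ p * h y) (Ioi 0)) (n : ℕ) {x : ℝ} (hx : 0 < x) :
    ContDiffAt ℝ n F x :=
  (((contDiffAt_id.div_const 2).rpow_const_of_ne (by simp [hx.ne'])).mul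
    (hh.of_le (by exact_mod_cast le_top)).contDiffAt).congr_of_eventuallyEq
      (eventuallyEq_of_mem (Ioi_mem_nhds hx) hF)

theorem exists_abs_iteratedDeriv_le_rpow_of_eqOn_half_rpow_mul (hh : ContDiff ℝ ∞ h)
    (hF : EqOn F (fun y => (y / 2) ^ p * h y) (Ioi 0)) (i : ℕ) (T : ℝ) :
    ∃ C, ∀ x ∈ Ioc 0 T, |iteratedDeriv i F x| ≤ C * x ^ (p - i) := by
  obtain ⟨M, hM⟩ := isCompact_Icc.exists_bound_of_continuousOn
    (contDiff_halfRpowDerivFactor (p := p) hh i).continuous.continuousOn (s := Icc 0 T)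
  refine ⟨M / 2 ^ (p - i), fun x hx => ?_⟩
  rw [iteratedDeriv_eqOn_half_rpow_mul hh hF i hx.1, abs_mul,
    abs_of_pos (Real.rpow_pos_of_pos (half_pos hx.1) _), Real.div_rpow hx.1.le zero_le_two]
  calc x ^ (p - i) / 2 ^ (p - i) * |halfRpowDerivFactor p h i x|
      ≤ x ^ (p - i) / 2 ^ (p - i) * M := by
        gcongr
        · exact div_nonneg (Real.rpow_nonneg hx.1.le _) (Real.rpow_nonneg zero_le_two _)
        · exact hM x (Ioc_subset_Icc_self hx)
    _ = _ := by ring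

theorem half_rpow_mul_bessel_ode (hh : ContDiff ℝ ∞ h)
    (hode : ∀ x, x ^ 2 * deriv (deriv h) x + (2 * p + 1) * x * deriv h x + x ^ 2 * h x = 0)
    (hF : EqOn F (fun y => (y / 2) ^ p * h y) (Ioi 0)) {x : ℝ} (hx : 0 < x) :
    x ^ 2 * iteratedDeriv 2 F x + x * iteratedDeriv 1 F x + (x ^ 2 - p ^ 2) * iteratedDeriv 0 F x
      = 0 := by
  have hh' := contDiff_infty_iff_deriv.1 hh
  have hd1 : HasDerivAt h (deriv h x) x := (hh'.1 x).hasDerivAt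
  have hd2 : HasDerivAt (deriv h) (deriv (deriv h) x) x :=
    ((contDiff_infty_iff_deriv.1 hh'.2).1 x).hasDerivAt
  have hg1 : HasDerivAt (halfRpowDerivFactor p h 1)
      (p / 2 * deriv h x + (1 / 2 * deriv h x + x / 2 * deriv (deriv h) x)) x := by
    have hg : halfRpowDerivFactor p h 1 = fun y => p / 2 * h y + y / 2 * deriv h y := by
      funext y; simp [halfRpowDerivFactor]
    rw [hg]
    exact (hd1.const_mul (p / 2)).fun_add (((hasDerivAt_id' x).div_const 2).fun_mul hd2)
  have hrepr : ∀ i : ℕ, iteratedDeriv i F x = (x / 2) ^ (p - i) * halfRpowDerivFactor p h i x :=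
    fun i => iteratedDeriv_eqOn_half_rpow_mul hh hF i hx
  have e2 : halfRpowDerivFactor p h 2 x = (p - 1) / 2 * halfRpowDerivFactor p h 1 x
      + x / 2 * deriv (halfRpowDerivFactor p h 1) x := by simp [halfRpowDerivFactor]
  have e1 : halfRpowDerivFactor p h 1 x = p / 2 * h x + x / 2 * deriv h x := by
    simp [halfRpowDerivFactor]
  have hp1 : (x / 2) ^ (p - 1) = (x / 2) ^ (p - 2) * (x / 2) := by
    rw [← Real.rpow_add_one (by positivity)]; ring_nf
  have hp0 : (x / 2) ^ p = (x / 2) ^ (p - 2) * (x / 2) ^ 2 := by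
    rw [← Real.rpow_natCast, ← Real.rpow_add (by positivity)]; norm_num
  rw [hrepr 0, hrepr 1, hrepr 2]
  push_cast
  rw [sub_zero, hp1, hp0, e2, hg1.deriv, e1, halfRpowDerivFactor]
  linear_combination (x / 2) ^ (p - 2) * x ^ 2 / 4 * hode x

end HalfRpowMul

section BesselODE

variable {ν : ℝ} {f : ℕ → ℝ → ℝ}

noncomputable def besselEnergy (ν : ℝ) (f : ℕ → ℝ → ℝ) (x : ℝ) : ℝ :=
  f 0 x ^ 2 + x ^ 2 / (x ^ 2 - ν ^ 2) * f 1 x ^ 2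

theorem sq_sub_sq_pos_of_abs_lt {x : ℝ} (hx : |ν| < x) : 0 < x ^ 2 - ν ^ 2 := by
  nlinarith [sq_abs ν, abs_nonneg ν]

theorem hasDerivAt_besselEnergy {x : ℝ} (hx : |ν| < x) (hf₀ : HasDerivAt (f 0) (f 1 x) x)
    (hf₁ : HasDerivAt (f 1) (f 2 x) x)
    (hode : x ^ 2 * f 2 x + x * f 1 x + (x ^ 2 - ν ^ 2) * f 0 x = 0) :
    HasDerivAt (besselEnergy ν f) (-2 * x ^ 3 * f 1 x ^ 2 / (x ^ 2 - ν ^ 2) ^ 2) x := by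
  have hx0 : 0 < x := (abs_nonneg ν).trans_lt hx
  have hxν := sq_sub_sq_pos_of_abs_lt hx
  have h2 : HasDerivAt (fun y : ℝ => y ^ 2) (2 * x) x := by simpa using hasDerivAt_pow 2 x
  have hq := h2.fun_div (h2.sub_const (ν ^ 2)) hxν.ne'
  refine ((hf₀.fun_pow 2).fun_add (hq.fun_mul (hf₁.fun_pow 2))).congr_deriv ?_
  have hf2 : f 2 x = (-(x * f 1 x) - (x ^ 2 - ν ^ 2) * f 0 x) / x ^ 2 := by
    rw [eq_div_iff (by positivity)]
    linear_combination hode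
  rw [hf2]
  field_simp
  ring

theorem antitoneOn_besselEnergy (hf : ∀ i, ∀ x > 0, HasDerivAt (f i) (f (i + 1) x) x)
    (hode : ∀ x > 0, x ^ 2 * f 2 x + x * f 1 x + (x ^ 2 - ν ^ 2) * f 0 x = 0) :
    AntitoneOn (besselEnergy ν f) (Ioi |ν|) := by
  have hE : ∀ x ∈ Ioi |ν|, HasDerivAt (besselEnergy ν f)
      (-2 * x ^ 3 * f 1 x ^ 2 / (x ^ 2 - ν ^ 2) ^ 2) x := fun x (hx : |ν| < x) => by
    have hx0 : 0 < x := (abs_nonneg ν).trans_lt hx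
    exact hasDerivAt_besselEnergy hx (hf 0 x hx0) (hf 1 x hx0) (hode x hx0)
  refine antitoneOn_of_hasDerivWithinAt_nonpos (convex_Ioi _)
    (fun x hx => (hE x hx).continuousAt.continuousWithinAt)
    (fun x hx => (hE x (interior_subset hx)).hasDerivWithinAt) fun x hx => ?_
  have hx0 : 0 < x := (abs_nonneg ν).trans_lt (interior_subset hx : |ν| < x)
  rw [neg_mul, neg_mul, neg_div]
  exact neg_nonpos.2 (by positivity)

theorem exists_abs_le_of_bessel_ode_zero_one {x₀ : ℝ} (hx₀ : |ν| < x₀)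
    (hf : ∀ i, ∀ x > 0, HasDerivAt (f i) (f (i + 1) x) x)
    (hode : ∀ x > 0, x ^ 2 * f 2 x + x * f 1 x + (x ^ 2 - ν ^ 2) * f 0 x = 0) :
    ∃ B, ∀ x ≥ x₀, |f 0 x| ≤ B ∧ |f 1 x| ≤ B := by
  refine ⟨√(besselEnergy ν f x₀), fun x hx => ⟨Real.abs_le_sqrt ?_, Real.abs_le_sqrt ?_⟩⟩
  all_goals
    have hxν := sq_sub_sq_pos_of_abs_lt (hx₀.trans_le hx)
    have hE := antitoneOn_besselEnergy hf hode hx₀ (hx₀.trans_le hx) hx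
    have hq : 1 ≤ x ^ 2 / (x ^ 2 - ν ^ 2) := by rw [one_le_div hxν]; nlinarith
    rw [besselEnergy] at hE
    nlinarith [sq_nonneg (f 0 x), sq_nonneg (f 1 x)]

open Polynomial in
theorem exists_polynomial_eq_of_bessel_ode (hf : ∀ i, ∀ x > 0, HasDerivAt (f i) (f (i + 1) x) x)
    (hode : ∀ x > 0, x ^ 2 * f 2 x + x * f 1 x + (x ^ 2 - ν ^ 2) * f 0 x = 0) (i : ℕ) :
    ∃ P Q : ℝ[X], ∀ x > 0, f i x = P.eval x⁻¹ * f 0 x + Q.eval x⁻¹ * f 1 x := by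
  induction i with
  | zero => exact ⟨1, 0, fun x _ => by simp⟩
  | succ i ih =>
    obtain ⟨P, Q, hPQ⟩ := ih
    refine ⟨-X ^ 2 * derivative P - Q * (1 - C (ν ^ 2) * X ^ 2),
      P - X ^ 2 * derivative Q - X * Q, fun x hx => ?_⟩
    have hinv : HasDerivAt (fun y : ℝ => y⁻¹) (-(x ^ 2)⁻¹) x := hasDerivAt_inv hx.ne'
    have hrhs := (((P.hasDerivAt x⁻¹).comp x hinv).mul (hf 0 x hx)).add
      (((Q.hasDerivAt x⁻¹).comp x hinv).mul (hf 1 x hx))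
    have hf2 : f 2 x = -x⁻¹ * f 1 x - (1 - ν ^ 2 * x⁻¹ ^ 2) * f 0 x := by
      field_simp
      linear_combination hode x hx
    rw [(hf i x hx).unique (hrhs.congr_of_eventuallyEq
      (eventuallyEq_of_mem (Ioi_mem_nhds hx) fun y hy => hPQ y hy))]
    simp only [Function.comp_apply, eval_sub, eval_mul, eval_neg, eval_pow, eval_X,
      eval_C, eval_one, hf2]
    rw [inv_pow]
    ring

theorem exists_abs_le_of_bessel_ode {x₀ : ℝ} (hx₀ : |ν| < x₀) (hx₁ : 1 ≤ x₀)
    (hf : ∀ i, ∀ x > 0, HasDerivAt (f i) (f (i + 1) x) x)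
    (hode : ∀ x > 0, x ^ 2 * f 2 x + x * f 1 x + (x ^ 2 - ν ^ 2) * f 0 x = 0) (i : ℕ) :
    ∃ B, ∀ x ≥ x₀, |f i x| ≤ B := by
  obtain ⟨B, hB⟩ := exists_abs_le_of_bessel_ode_zero_one hx₀ hf hode
  obtain ⟨P, Q, hPQ⟩ := exists_polynomial_eq_of_bessel_ode hf hode i
  obtain ⟨MP, hMP⟩ := isCompact_Icc.exists_bound_of_continuousOn P.continuous.continuousOn
    (s := Icc 0 1)
  obtain ⟨MQ, hMQ⟩ := isCompact_Icc.exists_bound_of_continuousOn Q.continuous.continuousOn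
    (s := Icc 0 1)
  refine ⟨MP * B + MQ * B, fun x hx => ?_⟩
  have hx0 : 0 < x := by linarith
  have hinv : x⁻¹ ∈ Icc (0 : ℝ) 1 := ⟨by positivity, inv_le_one_of_one_le₀ (by linarith)⟩
  have hP := hMP _ hinv
  have hQ := hMQ _ hinv
  rw [Real.norm_eq_abs] at hP hQ
  rw [hPQ x hx0]
  calc _ ≤ |P.eval x⁻¹| * |f 0 x| + |Q.eval x⁻¹| * |f 1 x| := by
        rw [← abs_mul, ← abs_mul]; exact abs_add_le _ _
    _ ≤ MP * B + MQ * B := by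
        gcongr
        · exact (abs_nonneg _).trans hP
        · exact (hB x hx).1
        · exact (abs_nonneg _).trans hQ
        · exact (hB x hx).2

end BesselODE

section BesselJ

variable {ν : ℝ}

theorem besselJ_eqOn :
    EqOn (besselJ ν) (fun x => (x / 2) ^ ν * besselSeries ν (x ^ 2 / 4)) (Ioi 0) := by
  intro x hx
  simp only [besselJ, besselSeries, ← tsum_mul_left]
  refine tsum_congr fun m => ?_
  rw [Real.rpow_add (by simpa using hx), ← Nat.cast_ofNat, ← Nat.cast_mul, Real.rpow_natCast,
    pow_mul, besselCoeff]
  ring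

theorem besselSeries_comp_sq_ode (hν : 0 ≤ ν) (x : ℝ) :
    x ^ 2 * deriv (deriv fun y => besselSeries ν (y ^ 2 / 4)) x
      + (2 * ν + 1) * x * deriv (fun y => besselSeries ν (y ^ 2 / 4)) x
      + x ^ 2 * besselSeries ν (x ^ 2 / 4) = 0 := by
  have ha := summable_besselCoeff hν
  have hsq : ∀ y : ℝ, HasDerivAt (fun y : ℝ => y ^ 2 / 4) (y / 2) y := fun y => by
    refine ((hasDerivAt_pow 2 y).div_const 4).congr_deriv ?_
    push_cast; ring
  have h1 : deriv (fun y => besselSeries ν (y ^ 2 / 4))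
      = fun y => (∑' m, derivCoeff (besselCoeff ν) m * (y ^ 2 / 4) ^ m) * (y / 2) :=
    funext fun y => ((hasDerivAt_tsum_pow ha _).comp y (hsq y)).deriv
  have h2 : HasDerivAt (fun y => (∑' m, derivCoeff (besselCoeff ν) m * (y ^ 2 / 4) ^ m) * (y / 2))
      ((∑' m, derivCoeff (derivCoeff (besselCoeff ν)) m * (x ^ 2 / 4) ^ m) * (x / 2) * (x / 2)
        + (∑' m, derivCoeff (besselCoeff ν) m * (x ^ 2 / 4) ^ m) * (1 / 2)) x :=
    ((hasDerivAt_tsum_pow (summable_derivCoeff ha) _).comp x (hsq x)).mul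
      ((hasDerivAt_id x).div_const 2)
  rw [h1, h2.deriv]
  linear_combination x ^ 2 * besselSeries_ode hν (x ^ 2 / 4)

theorem contDiff_besselSeries_comp_sq (hν : 0 ≤ ν) :
    ContDiff ℝ ∞ fun x => besselSeries ν (x ^ 2 / 4) :=
  (contDiff_tsum_pow (summable_besselCoeff hν)).comp (by fun_prop)

theorem besselJ_ode (hν : 0 ≤ ν) {x : ℝ} (hx : 0 < x) :
    x ^ 2 * iteratedDeriv 2 (besselJ ν) x + x * iteratedDeriv 1 (besselJ ν) x
      + (x ^ 2 - ν ^ 2) * iteratedDeriv 0 (besselJ ν) x = 0 :=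
  half_rpow_mul_bessel_ode (contDiff_besselSeries_comp_sq hν) (besselSeries_comp_sq_ode hν)
    besselJ_eqOn hx

theorem hasDerivAt_iteratedDeriv_besselJ (hν : 0 ≤ ν) (i : ℕ) {x : ℝ} (hx : 0 < x) :
    HasDerivAt (iteratedDeriv i (besselJ ν)) (iteratedDeriv (i + 1) (besselJ ν) x) x :=
  hasDerivAt_iteratedDeriv_of_eqOn_half_rpow_mul (contDiff_besselSeries_comp_sq hν) besselJ_eqOn
    i hx

theorem contDiffAt_besselJ (hν : 0 ≤ ν) (n : ℕ) {x : ℝ} (hx : 0 < x) :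
    ContDiffAt ℝ n (besselJ ν) x :=
  contDiffAt_of_eqOn_half_rpow_mul (contDiff_besselSeries_comp_sq hν) besselJ_eqOn n hx

theorem exists_abs_iteratedDeriv_besselJ_le {μ : ℝ} (hμ : 0 ≤ μ) (hμν : μ ≤ ν) (i : ℕ) :
    ∃ C, ∀ x > 0, |iteratedDeriv i (besselJ ν) x| ≤ C * (x ^ μ * ((1 + x) / x) ^ i) := by
  have hν : 0 ≤ ν := hμ.trans hμν
  obtain ⟨Cs, hCs⟩ := exists_abs_iteratedDeriv_le_rpow_of_eqOn_half_rpow_mul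
    (contDiff_besselSeries_comp_sq hν) besselJ_eqOn i (ν + 1)
  obtain ⟨B, hB⟩ := exists_abs_le_of_bessel_ode (f := fun i => iteratedDeriv i (besselJ ν))
    (x₀ := ν + 1)
    (by rw [abs_of_nonneg hν]; linarith) (by linarith)
    (fun i x hx => hasDerivAt_iteratedDeriv_besselJ hν i hx) (fun x hx => besselJ_ode hν hx) i
  refine ⟨|Cs| * (ν + 1) ^ (ν - μ) + |B|, fun x hx => ?_⟩
  have hρ : 1 ≤ (1 + x) / x := by rw [le_div_iff₀ hx]; linarith
  have hw : 0 ≤ x ^ μ * ((1 + x) / x) ^ i := by positivity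
  rcases le_or_gt x (ν + 1) with hxT | hxT
  · have hsplit : x ^ (ν - i) = x ^ (ν - μ) * (x ^ μ * (1 / x) ^ i) := by
      rw [one_div_pow, ← mul_assoc, ← Real.rpow_add hx, sub_add_cancel, Real.rpow_sub hx,
        Real.rpow_natCast, one_div, div_eq_mul_inv]
    calc |iteratedDeriv i (besselJ ν) x| ≤ Cs * x ^ (ν - i) := hCs x ⟨hx, hxT⟩
      _ ≤ |Cs| * (ν + 1) ^ (ν - μ) * (x ^ μ * ((1 + x) / x) ^ i) := by
        rw [hsplit, ← mul_assoc]
        gcongr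
        · exact le_abs_self Cs
        · linarith
      _ ≤ _ := by gcongr; exact le_add_of_nonneg_right (abs_nonneg B)
  · calc |iteratedDeriv i (besselJ ν) x| ≤ |B| * 1 := by
          rw [mul_one]; exact (hB x hxT.le).trans (le_abs_self B)
      _ ≤ |B| * (x ^ μ * ((1 + x) / x) ^ i) := by
        gcongr
        exact one_le_mul_of_one_le_of_one_le (Real.one_le_rpow (by linarith) hμ) (one_le_pow₀ hρ)
      _ ≤ _ := by gcongr; exact le_add_of_nonneg_left (by positivity)

end BesselJ

section BesselKernel

variable {ν μ : ℝ}

theorem iteratedDeriv_besselJ_comp_mul (hν : 0 ≤ ν) {r : ℝ} (hr : 0 < r) (j : ℕ) {l : ℝ}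
    (hl : 0 < l) :
    iteratedDeriv j (fun l => besselJ ν (l * r)) l
      = r ^ j * iteratedDeriv j (besselJ ν) (l * r) := by
  refine iteratedDeriv_eqOn_of_hasDerivAt
    (f := fun j l => r ^ j * iteratedDeriv j (besselJ ν) (l * r))
    isOpen_Ioi (fun l _ => by simp) (fun i l hl => ?_) j hl
  have := ((hasDerivAt_iteratedDeriv_besselJ hν i (mul_pos hl hr)).comp l
    (hasDerivAt_mul_const r)).const_mul (r ^ i)
  refine this.congr_deriv ?_
  ring

theorem exists_abs_iteratedDeriv_besselJ_comp_mul_le (hμ : 0 ≤ μ) (hμν : μ ≤ ν) (k : ℕ) :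
    ∃ C, ∀ l ∈ Ioc (0 : ℝ) 1, ∀ r > 0, ∀ j ≤ k,
      |iteratedDeriv j (fun l => r ^ (-μ) * besselJ ν (l * r)) l|
        ≤ C * l ^ μ * ((1 + r) / l) ^ j := by
  have hν : 0 ≤ ν := hμ.trans hμν
  choose C hC using exists_abs_iteratedDeriv_besselJ_le hμ hμν
  refine ⟨∑ j ∈ Finset.range (k + 1), |C j|, fun l ⟨hl0, hl1⟩ r hr j hj => ?_⟩
  have hlr : 0 < l * r := mul_pos hl0 hr
  rw [iteratedDeriv_const_mul_field, iteratedDeriv_besselJ_comp_mul hν hr j hl0, abs_mul,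
    abs_mul, abs_of_pos (by positivity), abs_of_pos (by positivity)]
  calc r ^ (-μ) * (r ^ j * |iteratedDeriv j (besselJ ν) (l * r)|)
      ≤ r ^ (-μ) * (r ^ j * (|C j| * ((l * r) ^ μ * ((1 + l * r) / (l * r)) ^ j))) := by
        gcongr
        exact (hC j (l * r) hlr).trans (by gcongr; exact le_abs_self _)
    _ = |C j| * l ^ μ * ((1 + l * r) / l) ^ j := by
        have : r ^ j * ((1 + l * r) / (l * r)) ^ j = ((1 + l * r) / l) ^ j := by
          rw [← mul_pow]; congr 1; field_simp
        rw [Real.mul_rpow hl0.le hr.le, Real.rpow_neg hr.le, ← this]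
        field_simp
    _ ≤ _ := by
        have hCj : |C j| ≤ ∑ j ∈ Finset.range (k + 1), |C j| :=
          Finset.single_le_sum (fun i _ => abs_nonneg (C i))
            (Finset.mem_range.2 (Nat.lt_succ_of_le hj))
        have hρ : (1 + l * r) / l ≤ (1 + r) / l := by
          gcongr; exact mul_le_of_le_one_left hr.le hl1
        gcongr

theorem exists_abs_iteratedDeriv_besselKernel_le (hμ : 0 ≤ μ) (hμν : μ ≤ ν) (k : ℕ) :
    ∃ C, ∀ l ∈ Ioc (0 : ℝ) 1, ∀ r > 0, ∀ s > 0,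
      |iteratedDeriv k (fun l => (r * s) ^ (-μ) * (besselJ ν (l * r) * besselJ ν (l * s))) l|
        ≤ C * l ^ (2 * μ - k) * ((1 + r) * (1 + s)) ^ k := by
  have hν : 0 ≤ ν := hμ.trans hμν
  obtain ⟨C, hC⟩ := exists_abs_iteratedDeriv_besselJ_comp_mul_le hμ hμν k
  refine ⟨C * C * 2 ^ k, fun l hl r hr s hs => ?_⟩
  have hl0 : 0 < l := hl.1
  have hfactor : ∀ {t : ℝ}, 0 < t → ContDiffAt ℝ k (fun l => t ^ (-μ) * besselJ ν (l * t)) l :=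
    fun ht => contDiffAt_const.mul
      ((contDiffAt_besselJ hν k (mul_pos hl.1 ht)).comp l (contDiffAt_id.mul contDiffAt_const))
  have hsplit : (fun l => (r * s) ^ (-μ) * (besselJ ν (l * r) * besselJ ν (l * s)))
      = fun l => r ^ (-μ) * besselJ ν (l * r) * (s ^ (-μ) * besselJ ν (l * s)) := by
    funext l
    rw [Real.mul_rpow hr.le hs.le]
    ring
  rw [hsplit]
  refine (abs_iteratedDeriv_mul_le (C := C * l ^ μ) (D := C * l ^ μ) (a := (1 + r) / l)
    (b := (1 + s) / l) (hfactor hr) (hfactor hs) (hC l hl r hr) (hC l hl s hs)).trans ?_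
  have hsum : (1 + r) / l + (1 + s) / l ≤ 2 * ((1 + r) * (1 + s)) / l := by
    rw [← add_div]; gcongr; nlinarith
  have hl_pow : l ^ (2 * μ - k) = (l ^ μ) ^ 2 / l ^ k := by
    rw [Real.rpow_sub hl.1, Real.rpow_natCast, mul_comm, ← Real.rpow_mul_natCast hl.1.le]; norm_num
  calc C * l ^ μ * (C * l ^ μ) * ((1 + r) / l + (1 + s) / l) ^ k
      ≤ C * l ^ μ * (C * l ^ μ) * (2 * ((1 + r) * (1 + s)) / l) ^ k := by
        gcongr
        · exact mul_self_nonneg _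
    _ = _ := by rw [hl_pow, div_pow, mul_pow]; ring

end BesselKernel

theorem setIntegral_setIntegral_le_mul_sq {α : Type*} [MeasurableSpace α] {μ : Measure α}
    {s : Set α} (hs : MeasurableSet s) {f : α → α → ℝ} {w : α → ℝ} {A : ℝ}
    (hw : IntegrableOn w s μ) (hf₀ : ∀ x ∈ s, ∀ y ∈ s, 0 ≤ f x y)
    (hf : ∀ x ∈ s, ∀ y ∈ s, f x y ≤ A * (w x * w y)) :
    ∫ x in s, ∫ y in s, f x y ∂μ ∂μ ≤ A * (∫ x in s, w x ∂μ) ^ 2 := by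
  have hinner : ∀ x ∈ s, ∫ y in s, f x y ∂μ ≤ (A * ∫ y in s, w y ∂μ) * w x := fun x hx => by
    calc ∫ y in s, f x y ∂μ ≤ ∫ y in s, A * w x * w y ∂μ :=
          integral_mono_of_nonneg (ae_restrict_of_forall_mem hs (hf₀ x hx)) (hw.const_mul _)
            (ae_restrict_of_forall_mem hs fun y hy => (hf x hx y hy).trans_eq (by ring))
      _ = _ := by rw [integral_const_mul]; ring
  calc ∫ x in s, ∫ y in s, f x y ∂μ ∂μ ≤ ∫ x in s, (A * ∫ y in s, w y ∂μ) * w x ∂μ :=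
        integral_mono_of_nonneg
          (ae_restrict_of_forall_mem hs fun x hx => setIntegral_nonneg hs (hf₀ x hx))
          (hw.const_mul _) (ae_restrict_of_forall_mem hs hinner)
    _ = _ := by rw [integral_const_mul]; ring

theorem integrableOn_one_add_rpow_Ioi {p : ℝ} (hp : p < -1) :
    IntegrableOn (fun t : ℝ => (1 + t) ^ p) (Ioi 0) := by
  have hint := integrable_one_add_norm (E := ℝ) (μ := volume) (r := -p) (by simp; linarith)
  refine (hint.integrableOn (s := Ioi 0)).congr_fun (fun t ht => ?_) measurableSet_Ioi
  simp [abs_of_pos (mem_Ioi.1 ht)]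

theorem one_add_pow_mul_rpow_mul_rpow_le {k : ℕ} {σ m t : ℝ} (hm : 0 ≤ m) (ht : 0 ≤ t) :
    (1 + t) ^ (2 * k) * (1 + t) ^ (-(2 * σ)) * t ^ m ≤ (1 + t) ^ (2 * k + m - 2 * σ) := by
  have h1 : 0 < 1 + t := by linarith
  calc (1 + t) ^ (2 * k) * (1 + t) ^ (-(2 * σ)) * t ^ m
      ≤ (1 + t) ^ (2 * k) * (1 + t) ^ (-(2 * σ)) * (1 + t) ^ m := by
        gcongr; linarith
    _ = _ := by
        rw [← Real.rpow_natCast, ← Real.rpow_add h1, ← Real.rpow_add h1]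
        push_cast; ring_nf

theorem sq_abs_mul_weights_le {D A r s σ m : ℝ} {k : ℕ} (hr : 0 < r) (hs : 0 < s) (hm : 0 ≤ m)
    (hD : |D| ≤ A * ((1 + r) * (1 + s)) ^ k) :
    |D| ^ 2 * (1 + r) ^ (-(2 * σ)) * (1 + s) ^ (-(2 * σ)) * (r * s) ^ m
      ≤ A ^ 2 * ((1 + r) ^ (2 * k + m - 2 * σ) * (1 + s) ^ (2 * k + m - 2 * σ)) := by
  calc |D| ^ 2 * (1 + r) ^ (-(2 * σ)) * (1 + s) ^ (-(2 * σ)) * (r * s) ^ m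
      ≤ (A * ((1 + r) * (1 + s)) ^ k) ^ 2 * (1 + r) ^ (-(2 * σ)) * (1 + s) ^ (-(2 * σ))
          * (r * s) ^ m := by gcongr
    _ = A ^ 2 * (((1 + r) ^ (2 * k) * (1 + r) ^ (-(2 * σ)) * r ^ m)
          * ((1 + s) ^ (2 * k) * (1 + s) ^ (-(2 * σ)) * s ^ m)) := by
        rw [Real.mul_rpow hr.le hs.le, mul_pow (1 + r)]; ring
    _ ≤ _ := by
        gcongr
        · exact one_add_pow_mul_rpow_mul_rpow_le hm hr.le
        · exact one_add_pow_mul_rpow_mul_rpow_le hm hs.le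

theorem imag_resolvent_deriv_HS_bound_lowfreq
    (n : ℕ) (hn : 3 ≤ n) (ν : ℝ) (hν : ((n : ℝ) - 2) / 2 ≤ ν)
    (k : ℕ) (σ : ℝ) (hσ : (n : ℝ) / 2 + (k : ℝ) < σ) :
    ∃ C > (0 : ℝ), ∀ lam : ℝ, 0 < lam → lam ≤ 1 →
      Real.sqrt (∫ r in Ioi (0 : ℝ), ∫ s in Ioi (0 : ℝ),
          |iteratedDeriv k
              (fun l : ℝ => (r * s) ^ (-(((n : ℝ) - 2) / 2)) *
                (besselJ ν (l * r) * besselJ ν (l * s))) lam| ^ (2 : ℕ) *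
            (1 + r) ^ (-(2 * σ)) * (1 + s) ^ (-(2 * σ)) * (r * s) ^ ((n : ℝ) - 1))
        ≤ C * lam ^ ((n : ℝ) - 2 - (k : ℝ)) := by
  have hn' : (3 : ℝ) ≤ n := by exact_mod_cast hn
  obtain ⟨A, hA⟩ := exists_abs_iteratedDeriv_besselKernel_le (by linarith) hν k
  set p : ℝ := 2 * k + ((n : ℝ) - 1) - 2 * σ
  set I := ∫ t in Ioi (0 : ℝ), (1 + t) ^ p
  have hI : 0 ≤ I := setIntegral_nonneg measurableSet_Ioi fun t (ht : 0 < t) => by positivity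
  refine ⟨|A| * I + 1, add_pos_of_nonneg_of_pos (mul_nonneg (abs_nonneg A) hI) one_pos,
    fun lam hl0 hl1 => ?_⟩
  have hint := setIntegral_setIntegral_le_mul_sq measurableSet_Ioi
    (integrableOn_one_add_rpow_Ioi (p := p) (by linarith))
    (fun r (hr : 0 < r) s (hs : 0 < s) => by positivity)
    (fun r (hr : 0 < r) s (hs : 0 < s) =>
      sq_abs_mul_weights_le hr hs (by linarith) (hA lam ⟨hl0, hl1⟩ r hr s hs))
  have hexp : 2 * (((n : ℝ) - 2) / 2) - k = (n : ℝ) - 2 - k := by ring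
  rw [hexp] at hint
  calc _ ≤ √((A * lam ^ ((n : ℝ) - 2 - k)) ^ 2 * I ^ 2) := Real.sqrt_le_sqrt hint
    _ = |A| * I * lam ^ ((n : ℝ) - 2 - k) := by
        rw [← mul_pow, Real.sqrt_sq_eq_abs, abs_mul, abs_mul,
          abs_of_pos (Real.rpow_pos_of_pos hl0 _),
          abs_of_nonneg hI]
        ring
    _ ≤ _ := by gcongr; linarith
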